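/- Let ρ be a density matrix on a finite-dimensional complex space, let Ω be a nonempty finite index set, and let (O_x)_{x ∈ Ω} be matrices of the same size as ρ. Then the averaged two-point fidelity correlator dominates the square of the averaged one-point fidelity correlator: (1/|Ω|²) Σ_{x,y ∈ Ω} F(ρ, (O_x O_y†) ρ (O_x O_y†)†) ≥ ( (1/|Ω|) Σ_{x ∈ Ω} F(ρ, O_x ρ O_x†) )². -/

import Mathlib

/-!
Write `F(ρ, X ρ Xᴴ) = ‖√ρ X √ρ‖₁`, where `‖M‖₁ = tr √(M Mᴴ)` is the trace norm. Polar
decomposition shows that `‖M‖₁` is the maximum of `Re tr (M V)` over contractions `V`, attained at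
`V = Cᴴ` for the contraction `C` of `M = √(M Mᴴ) C`. Choosing these maximisers `C x` for
`M x = √ρ O x √ρ` turns `∑ x ‖M x‖₁` into `Re tr (Zᴴ √ρ)` with `Z = ∑ x (O x)ᴴ √ρ C x`.
Cauchy–Schwarz for the Hilbert–Schmidt inner product and `tr ρ = 1` bound its square by
`tr (Zᴴ Z) = ∑ x y tr (√ρ O x (O y)ᴴ √ρ · C y (C x)ᴴ)`, and every term is at most
`‖√ρ O x (O y)ᴴ √ρ‖₁` because `C y (C x)ᴴ` is again a contraction.
-/

noncomputable section

open scoped Matrix Kronecker ComplexOrder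

/-- The positive semidefinite square root of a matrix (defaults to `0` if not PSD). -/
noncomputable def matSqrt {n : Type*} [Fintype n] [DecidableEq n] (M : Matrix n n ℂ) :
    Matrix n n ℂ :=
  open scoped Classical in
  if h : M.PosSemidef then
    h.1.eigenvectorUnitary.1 * Matrix.diagonal ((↑) ∘ (√·) ∘ h.1.eigenvalues) *
      (star h.1.eigenvectorUnitary : Matrix n n ℂ)
  else 0

/-- The fidelity `F(ρ, σ) = tr √(√ρ σ √ρ)` of two PSD matrices. -/
noncomputable def fidelity {n : Type*} [Fintype n] [DecidableEq n] (ρ σ : Matrix n n ℂ) : ℝ :=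
  (matSqrt (matSqrt ρ * σ * matSqrt ρ)).trace.re

/-- The ℓ²→ℓ² operator norm of a complex matrix. -/
noncomputable def opNorm {m n : Type*} [Fintype m] [Fintype n] [DecidableEq n]
    (M : Matrix m n ℂ) : ℝ :=
  ‖(Matrix.toEuclideanLin.trans LinearMap.toContinuousLinearMap) M‖

/-- Partial trace over the second tensor factor. -/
noncomputable def ptraceB {A B : Type*} [Fintype B]
    (ρ : Matrix (A × B) (A × B) ℂ) : Matrix A A ℂ :=
  Matrix.of fun a a' => ∑ b : B, ρ (a, b) (a', b)

open scoped MatrixOrder Matrix.Norms.L2Operator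

namespace Matrix

section RCLike

variable {𝕜 m n : Type*} [RCLike 𝕜] [Fintype m] [Fintype n]

lemma re_trace_conjTranspose_mul_sq_le (A B : Matrix m n 𝕜) :
    RCLike.re (Aᴴ * B).trace ^ 2 ≤ RCLike.re (Aᴴ * A).trace * RCLike.re (Bᴴ * B).trace := by
  have h_inner (A B : Matrix m n 𝕜) :
      (Aᴴ * B).trace = inner 𝕜 (WithLp.toLp 2 A.vec) (WithLp.toLp 2 B.vec) := by
    rw [EuclideanSpace.inner_toLp_toLp, dotProduct_comm, star_vec_dotProduct_vec]
  rw [h_inner, h_inner, h_inner]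
  set x : EuclideanSpace 𝕜 (n × m) := WithLp.toLp 2 A.vec
  set y : EuclideanSpace 𝕜 (n × m) := WithLp.toLp 2 B.vec
  calc RCLike.re (inner 𝕜 x y) ^ 2 ≤ ‖inner 𝕜 x y‖ * ‖inner 𝕜 y x‖ := by
        rw [norm_inner_symm y x, ← sq, ← sq_abs]
        exact pow_le_pow_left₀ (abs_nonneg _) (RCLike.abs_re_le_norm _) 2
    _ ≤ _ := inner_mul_inner_self_le x y

lemma re_trace_mono {A B : Matrix n n 𝕜} (h : A ≤ B) : RCLike.re A.trace ≤ RCLike.re B.trace :=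
  (RCLike.le_iff_re_im.mp (OrderHomClass.mono (tracePositiveLinearMap n 𝕜 𝕜) h)).1

end RCLike

variable {n : Type*} [Fintype n] [DecidableEq n]

lemma norm_le_one_iff_mul_conjTranspose_le_one {V : Matrix n n ℂ} : ‖V‖ ≤ 1 ↔ V * Vᴴ ≤ 1 := by
  rw [← CStarAlgebra.norm_le_one_iff_of_nonneg _ (posSemidef_self_mul_conjTranspose V).nonneg,
    ← star_eq_conjTranspose, CStarRing.norm_self_mul_star, ← sq, sq_le_one_iff₀ (norm_nonneg _)]

lemma re_trace_conjTranspose_mul_mul_le {P X : Matrix n n ℂ} (hP : 0 ≤ P) (hX : ‖X‖ ≤ 1) :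
    (Xᴴ * P * X).trace.re ≤ P.trace.re := by
  set Q := CFC.sqrt P
  have hQ : star Q = Q := (CFC.sqrt_nonneg P).isSelfAdjoint
  have h_conj : Q * (X * Xᴴ) * star Q ≤ Q * 1 * star Q :=
    star_right_conjugate_le_conjugate (norm_le_one_iff_mul_conjTranspose_le_one.mp hX) Q
  rw [hQ, mul_one, CFC.sqrt_mul_sqrt_self P] at h_conj
  calc (Xᴴ * P * X).trace.re = (Q * (X * Xᴴ) * Q).trace.re := by
        conv_lhs => rw [← CFC.sqrt_mul_sqrt_self P, ← mul_assoc, trace_mul_comm, ← mul_assoc]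
        rw [trace_mul_cycle]
        simp only [Q, mul_assoc]
    _ ≤ P.trace.re := re_trace_mono h_conj

/-- `√t * (√t)⁻¹` is the indicator of `t ≠ 0` on `[0, ∞)`, so the left factor is the range
projection of `M * Mᴴ`. -/
lemma cfc_sqrt_mul_inv_sqrt_mul_eq (M : Matrix n n ℂ) :
    cfc (fun t : ℝ => √t * (√t)⁻¹) (M * Mᴴ) * M = M := by
  set H := M * Mᴴ
  have hH : 0 ≤ H := (posSemidef_self_mul_conjTranspose M).nonneg
  have hcont (f : ℝ → ℝ) : ContinuousOn f (spectrum ℝ H) := H.finite_real_spectrum.continuousOn f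
  set E := cfc (fun t : ℝ => 1 - √t * (√t)⁻¹) H with hE_def
  have hE : Eᴴ = E := (cfc_predicate _ H : IsSelfAdjoint E)
  have h_zero : E * M * star (E * M) = 0 :=
    calc E * M * star (E * M) = E * H * E := by
          simp only [H, star_eq_conjTranspose, conjTranspose_mul, hE, mul_assoc]
      _ = cfc (fun t : ℝ => (1 - √t * (√t)⁻¹) * t * (1 - √t * (√t)⁻¹)) H := by
        rw [cfc_mul _ _ H (hcont _) (hcont _), cfc_mul _ _ H (hcont _) (hcont _), cfc_id' ℝ H]
      _ = cfc (0 : ℝ → ℝ) H := by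
        refine cfc_congr fun t ht => ?_
        rcases (spectrum_nonneg_of_nonneg hH ht).eq_or_lt with rfl | ht_pos
        · simp
        · simp [(Real.sqrt_pos.mpr ht_pos).ne']
      _ = 0 := cfc_zero ℝ H
  rw [CStarRing.mul_star_self_eq_zero_iff, hE_def, cfc_sub _ _ H (hcont _) (hcont _),
    cfc_const_one ℝ H, sub_mul, one_mul, sub_eq_zero] at h_zero
  exact h_zero.symm

lemma exists_polar_decomposition (M : Matrix n n ℂ) :
    ∃ C : Matrix n n ℂ, ‖C‖ ≤ 1 ∧ M * Cᴴ = CFC.sqrt (M * Mᴴ) ∧ CFC.sqrt (M * Mᴴ) * C = M := by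
  have hH : 0 ≤ M * Mᴴ := (posSemidef_self_mul_conjTranspose M).nonneg
  have hcont (f : ℝ → ℝ) : ContinuousOn f (spectrum ℝ (M * Mᴴ)) :=
    (M * Mᴴ).finite_real_spectrum.continuousOn f
  have h_sq {t : ℝ} (ht : t ∈ spectrum ℝ (M * Mᴴ)) : ∃ s, 0 ≤ s ∧ t = s * s ∧ √t = s :=
    ⟨√t, Real.sqrt_nonneg t, (Real.mul_self_sqrt (spectrum_nonneg_of_nonneg hH ht)).symm, rfl⟩
  have hP : CFC.sqrt (M * Mᴴ) = cfc Real.sqrt (M * Mᴴ) := by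
    rw [CFC.sqrt_eq_real_sqrt _ hH, cfcₙ_eq_cfc]
  -- `(√0)⁻¹ = 0`, so `G` is the pseudo-inverse of `√(M * Mᴴ)`.
  set G := cfc (fun t : ℝ => (√t)⁻¹) (M * Mᴴ)
  have hG : Gᴴ = G := (cfc_predicate _ _ : IsSelfAdjoint G)
  refine ⟨G * M, ?_, ?_, ?_⟩
  · rw [norm_le_one_iff_mul_conjTranspose_le_one]
    calc G * M * (G * M)ᴴ = G * (M * Mᴴ) * G := by simp only [conjTranspose_mul, hG, mul_assoc]
      _ = cfc (fun t : ℝ => (√t)⁻¹ * t * (√t)⁻¹) (M * Mᴴ) := by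
          rw [cfc_mul _ _ _ (hcont _) (hcont _), cfc_mul _ _ _ (hcont _) (hcont _),
            cfc_id' ℝ (M * Mᴴ)]
      _ ≤ 1 := by
        refine cfc_le_one _ _ fun t ht => ?_
        obtain ⟨s, hs, rfl, hst⟩ := h_sq ht
        rw [hst]
        rcases hs.eq_or_lt with rfl | hs
        · simp
        · field_simp; rfl
  · rw [conjTranspose_mul, hG, ← mul_assoc, hP]
    conv_lhs => rw [← cfc_id' ℝ (M * Mᴴ)]
    rw [← cfc_mul _ _ _ (hcont _) (hcont _)]
    refine cfc_congr fun t ht => ?_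
    obtain ⟨s, hs, rfl, hst⟩ := h_sq ht
    rw [hst]
    rcases hs.eq_or_lt with rfl | hs
    · simp
    · field_simp
  · rw [hP, ← mul_assoc, ← cfc_mul _ _ _ (hcont _) (hcont _)]
    exact cfc_sqrt_mul_inv_sqrt_mul_eq M

def traceNorm (M : Matrix n n ℂ) : ℝ := (CFC.sqrt (M * Mᴴ)).trace.re

lemma traceNorm_nonneg (M : Matrix n n ℂ) : 0 ≤ traceNorm M := by
  simpa [traceNorm] using re_trace_mono (CFC.sqrt_nonneg (M * Mᴴ))

lemma re_trace_mul_le_traceNorm (M : Matrix n n ℂ) {V : Matrix n n ℂ} (hV : ‖V‖ ≤ 1) :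
    (M * V).trace.re ≤ traceNorm M := by
  obtain ⟨C, hC, -, hPC⟩ := exists_polar_decomposition M
  set P := CFC.sqrt (M * Mᴴ)
  set Q := CFC.sqrt P
  have hQ : Qᴴ = Q := (CFC.sqrt_nonneg P).isSelfAdjoint
  have hQQ : Qᴴ * Q = P := by rw [hQ]; exact CFC.sqrt_mul_sqrt_self P
  have hMV : M * V = Qᴴ * (Q * (C * V)) := by rw [← hPC, ← hQQ]; noncomm_ring
  have hCV : ((Q * (C * V))ᴴ * (Q * (C * V))).trace.re ≤ traceNorm M := by
    rw [conjTranspose_mul, mul_assoc, ← mul_assoc Qᴴ, hQQ, ← mul_assoc]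
    exact re_trace_conjTranspose_mul_mul_le (CFC.sqrt_nonneg _)
      ((norm_mul_le C V).trans (mul_le_one₀ hC (norm_nonneg V) hV))
  have h_sq : (M * V).trace.re ^ 2 ≤ traceNorm M ^ 2 := by
    rw [hMV, sq (traceNorm M)]
    refine (re_trace_conjTranspose_mul_sq_le Q (Q * (C * V))).trans ?_
    rw [hQQ]
    exact mul_le_mul_of_nonneg_left hCV (traceNorm_nonneg M)
  exact (abs_le_of_sq_le_sq' h_sq (traceNorm_nonneg M)).2

lemma sq_sum_traceNorm_le {Ω : Type*} [Fintype Ω] (R : Matrix n n ℂ) (O : Ω → Matrix n n ℂ) :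
    (∑ x, traceNorm (R * O x * R)) ^ 2 ≤
      (Rᴴ * R).trace.re * ∑ x, ∑ y, traceNorm (R * (O x * (O y)ᴴ) * Rᴴ) := by
  choose C hC hMC using fun x => exists_polar_decomposition (R * O x * R)
  set B : Ω → Matrix n n ℂ := fun x => (O x)ᴴ * Rᴴ * C x
  have h_one_point (x : Ω) : traceNorm (R * O x * R) = ((B x)ᴴ * R).trace.re := by
    rw [traceNorm, ← (hMC x).1, trace_mul_comm]
    simp only [B, conjTranspose_mul, conjTranspose_conjTranspose, mul_assoc]
  have h_two_point (x y : Ω) :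
      ((B x)ᴴ * B y).trace.re ≤ traceNorm (R * (O x * (O y)ᴴ) * Rᴴ) := by
    have hV : ‖C y * (C x)ᴴ‖ ≤ 1 := by
      refine (norm_mul_le _ _).trans ?_
      rw [l2_opNorm_conjTranspose]
      exact mul_le_one₀ (hC y) (norm_nonneg _) (hC x)
    calc ((B x)ᴴ * B y).trace.re = ((C x)ᴴ * (R * (O x * (O y)ᴴ) * Rᴴ * C y)).trace.re := by
          simp only [B, conjTranspose_mul, conjTranspose_conjTranspose, mul_assoc]
      _ = (R * (O x * (O y)ᴴ) * Rᴴ * (C y * (C x)ᴴ)).trace.re := by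
          rw [trace_mul_comm, mul_assoc]
      _ ≤ traceNorm (R * (O x * (O y)ᴴ) * Rᴴ) := re_trace_mul_le_traceNorm _ hV
  calc (∑ x, traceNorm (R * O x * R)) ^ 2 = ((∑ x, B x)ᴴ * R).trace.re ^ 2 := by
        simp only [h_one_point, conjTranspose_sum, Finset.sum_mul, trace_sum, Complex.re_sum]
    _ ≤ ((∑ x, B x)ᴴ * ∑ x, B x).trace.re * (Rᴴ * R).trace.re :=
        re_trace_conjTranspose_mul_sq_le (∑ x, B x) R
    _ ≤ (Rᴴ * R).trace.re * ∑ x, ∑ y, traceNorm (R * (O x * (O y)ᴴ) * Rᴴ) := by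
        rw [mul_comm]
        refine mul_le_mul_of_nonneg_left ?_ ?_
        · simp only [conjTranspose_sum, Finset.sum_mul, Finset.mul_sum, trace_sum, Complex.re_sum]
          rw [Finset.sum_comm]
          exact Finset.sum_le_sum fun x _ => Finset.sum_le_sum fun y _ => h_two_point x y
        · simpa using re_trace_mono (posSemidef_conjTranspose_mul_self R).nonneg

end Matrix

open Matrix

lemma matSqrt_eq_sqrt {n : Type*} [Fintype n] [DecidableEq n] {M : Matrix n n ℂ}
    (hM : M.PosSemidef) : matSqrt M = CFC.sqrt M := by
  rw [matSqrt, dif_pos hM, CFC.sqrt_eq_real_sqrt M hM.nonneg, cfcₙ_eq_cfc, hM.1.cfc_eq]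
  rfl

lemma fidelity_mul_mul_conjTranspose_eq_traceNorm {n : Type*} [Fintype n] [DecidableEq n]
    {ρ : Matrix n n ℂ} (hρ : ρ.PosSemidef) (X : Matrix n n ℂ) :
    fidelity ρ (X * ρ * Xᴴ) = traceNorm (CFC.sqrt ρ * X * CFC.sqrt ρ) := by
  set R := CFC.sqrt ρ
  have hR : Rᴴ = R := (CFC.sqrt_nonneg ρ).isSelfAdjoint
  have h_factor : R * (X * (R * R) * Xᴴ) * R = R * X * R * (R * X * R)ᴴ := by
    simp only [conjTranspose_mul, hR, mul_assoc]
  rw [CFC.sqrt_mul_sqrt_self ρ hρ.nonneg] at h_factor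
  rw [fidelity, matSqrt_eq_sqrt hρ, h_factor,
    matSqrt_eq_sqrt (posSemidef_self_mul_conjTranspose _), traceNorm]

theorem avg_two_point_ge_sq_avg_one_point_general
    {n : Type*} [Fintype n] [DecidableEq n]
    (ρ : Matrix n n ℂ) (hρ : ρ.PosSemidef) (hρtr : ρ.trace = 1)
    {Ω : Type*} [Fintype Ω] (O : Ω → Matrix n n ℂ) :
    ((1 : ℝ) / (Fintype.card Ω) ^ 2) *
        ∑ x : Ω, ∑ y : Ω,
          fidelity ρ ((O x * (O y)ᴴ) * ρ * (O x * (O y)ᴴ)ᴴ) ≥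
      (((1 : ℝ) / Fintype.card Ω) * ∑ x : Ω, fidelity ρ (O x * ρ * (O x)ᴴ)) ^ 2 := by
  set R := CFC.sqrt ρ
  have hR : Rᴴ = R := (CFC.sqrt_nonneg ρ).isSelfAdjoint
  have h_tr : (Rᴴ * R).trace.re = 1 := by
    rw [hR, CFC.sqrt_mul_sqrt_self ρ hρ.nonneg, hρtr, Complex.one_re]
  have h_cs := sq_sum_traceNorm_le R O
  rw [h_tr, one_mul, hR] at h_cs
  simp only [fidelity_mul_mul_conjTranspose_eq_traceNorm hρ]
  rw [ge_iff_le, mul_pow, div_pow, one_pow]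
  exact mul_le_mul_of_nonneg_left h_cs (by positivity)

/-- **Theorem (averaged one-point vs two-point fidelity correlators)**: the averaged two-point
fidelity correlator dominates the square of the averaged one-point fidelity correlator. -/
theorem avg_two_point_ge_sq_avg_one_point
    {n : Type*} [Fintype n] [DecidableEq n]
    (ρ : Matrix n n ℂ) (hρ : ρ.PosSemidef) (hρtr : ρ.trace = 1)
    {Ω : Type*} [Fintype Ω] [Nonempty Ω] (O : Ω → Matrix n n ℂ) :
    ((1 : ℝ) / (Fintype.card Ω) ^ 2) *
        ∑ x : Ω, ∑ y : Ω,
          fidelity ρ ((O x * (O y)ᴴ) * ρ * (O x * (O y)ᴴ)ᴴ) ≥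
      (((1 : ℝ) / Fintype.card Ω) * ∑ x : Ω, fidelity ρ (O x * ρ * (O x)ᴴ)) ^ 2 :=
  avg_two_point_ge_sq_avg_one_point_general ρ hρ hρtr O
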